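/- Let t be a real number with 1/2 ≤ t, and let p, q, r be real numbers in [0,1] with 1 - t < p < t. Then P_bal(p,q,r) < t and P_unbal(p,q,r) < t; that is, an edge whose positive-sign probability lies strictly between 1-t and t cannot belong to any uncertain balanced or uncertain unbalanced triangle at threshold t. -/

import Mathlib

/-- Probability that a triangle with positive-sign probabilities p, q, r is balanced. -/
def Pbal (p q r : ℝ) : ℝ :=
  p*q*r + p*(1-q)*(1-r) + (1-p)*q*(1-r) + (1-p)*(1-q)*r

/-- Probability that a triangle with positive-sign probabilities p, q, r is unbalanced. -/
def Punbal (p q r : ℝ) : ℝ :=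
  (1-p)*(1-q)*(1-r) + p*q*(1-r) + p*(1-q)*r + (1-p)*q*r

/-!
Conditioning on whether the edges with probabilities `q` and `r` carry the same sign (which
happens with probability `w = q r + (1-q)(1-r) ∈ [0,1]`), both `P_bal` and `P_unbal` are convex
combinations of `p` and `1 - p`. Both of these lie in the convex set `(-∞, t)`, hence so do
`P_bal` and `P_unbal`.
-/

open Set

lemma Convex.mul_add_one_sub_mul_mem {s : Set ℝ} (hs : Convex ℝ s) {a b w : ℝ}
    (ha : a ∈ s) (hb : b ∈ s) (hw : w ∈ Icc (0 : ℝ) 1) : w * a + (1 - w) * b ∈ s :=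
  hs ha hb hw.1 (sub_nonneg.2 hw.2) (add_sub_cancel w 1)

def sameSignProb (q r : ℝ) : ℝ := q * r + (1 - q) * (1 - r)

lemma sameSignProb_mem_Icc {q r : ℝ} (hq : q ∈ Icc (0 : ℝ) 1) (hr : r ∈ Icc (0 : ℝ) 1) :
    sameSignProb q r ∈ Icc (0 : ℝ) 1 :=
  (convex_Icc 0 1).mul_add_one_sub_mul_mem hr ⟨by linarith [hr.2], by linarith [hr.1]⟩ hq

lemma Pbal_eq (p q r : ℝ) :
    Pbal p q r = sameSignProb q r * p + (1 - sameSignProb q r) * (1 - p) := by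
  unfold Pbal sameSignProb; ring

lemma Punbal_eq (p q r : ℝ) :
    Punbal p q r = sameSignProb q r * (1 - p) + (1 - sameSignProb q r) * p := by
  unfold Punbal sameSignProb; ring

theorem unclassified_edge_prunes_general (t p q r : ℝ)
    (hq : q ∈ Set.Icc (0:ℝ) 1) (hr : r ∈ Set.Icc (0:ℝ) 1)
    (hlo : 1 - t < p) (hhi : p < t) :
    Pbal p q r < t ∧ Punbal p q r < t := by
  have hw := sameSignProb_mem_Icc hq hr
  have hp_lt : p ∈ Iio t := hhi
  have hp'_lt : 1 - p ∈ Iio t := show 1 - p < t by linarith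
  rw [Pbal_eq, Punbal_eq]
  exact ⟨(convex_Iio t).mul_add_one_sub_mul_mem hp_lt hp'_lt hw,
    (convex_Iio t).mul_add_one_sub_mul_mem hp'_lt hp_lt hw⟩

theorem unclassified_edge_prunes (t p q r : ℝ) (ht : 1/2 ≤ t)
    (hp : p ∈ Set.Icc (0:ℝ) 1) (hq : q ∈ Set.Icc (0:ℝ) 1) (hr : r ∈ Set.Icc (0:ℝ) 1)
    (hlo : 1 - t < p) (hhi : p < t) :
    Pbal p q r < t ∧ Punbal p q r < t :=
  unclassified_edge_prunes_general t p q r hq hr hlo hhi
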